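/- In the counterexample system, any fixed (non-adaptive) schedule of two measurement times from {0,1,2} incurs strictly positive expected mean square error: for each choice of {t₁,t₂} ⊆ {0,1,2} with t₁ < t₂, the sum over t=0..2 of the conditional error variances E[(x(t) − E[x(t) | y(t_k), t_k ≤ t])²] is strictly positive, and it is minimized by the schedule t₁=1, t₂=2, whose total error equals 1 (the error at time 0 from not observing x(0) ∈ {−1, +1}). -/

import Mathlib

open MeasureTheory

/-- Total filtering error of a fixed measurement schedule `s ⊆ {0,1,2}`:
the sum over `t = 0,1,2` of the mean square error of the conditional
expectation of `x t` given the measurements acquired at times in `s` up to `t`. -/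
noncomputable def totalErr {Ω : Type*} [mΩ : MeasurableSpace Ω] (μ : Measure Ω)
    (x : ℕ → Ω → ℝ) (s : Finset ℕ) : ℝ :=
  ∑ t ∈ Finset.range 3,
    ∫ ω, (x t ω -
      (μ[x t | ⨆ k ∈ s.filter (· ≤ t), MeasurableSpace.comap (x k) inferInstance]) ω) ^ 2 ∂μ

/-!
The error of a schedule at time `t` vanishes as soon as `x t` itself is measured. Otherwise the
missing state is a uniform noise switched on by an event that the available measurements
determine, and that noise is independent of them; so the conditional mean is `0` and the error is
`P(event) · E[w²] = 1/2 · 12 = 6`. The only other possible loss is at time `0` with no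
measurement, where the error is `Var x(0) = 1`.
-/

open ProbabilityTheory Set

noncomputable def mse {Ω : Type*} [MeasurableSpace Ω] (μ : Measure Ω) (f : Ω → ℝ)
    (m : MeasurableSpace Ω) : ℝ :=
  ∫ ω, (f ω - μ[f | m] ω) ^ 2 ∂μ

abbrev scheduleInfo {Ω : Type*} (x : ℕ → Ω → ℝ) (s : Finset ℕ) (t : ℕ) : MeasurableSpace Ω :=
  ⨆ k ∈ s.filter (· ≤ t), MeasurableSpace.comap (x k) inferInstance

section MeanSquareError

variable {Ω : Type*} {m mΩ : MeasurableSpace Ω} {μ : Measure Ω}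

lemma mse_eq_zero_of_stronglyMeasurable (hm : m ≤ mΩ) [SigmaFinite (μ.trim hm)] {f : Ω → ℝ}
    (hf : StronglyMeasurable[m] f) (hfi : Integrable f μ) : mse μ f m = 0 := by
  simp [mse, condExp_of_stronglyMeasurable hm hf hfi]

lemma mse_eq_integral_sq_of_condExp_ae_eq_zero {f : Ω → ℝ} (h : μ[f | m] =ᵐ[μ] 0) :
    mse μ f m = ∫ ω, f ω ^ 2 ∂μ :=
  integral_congr_ae (h.mono fun ω hω => by simp [hω])

lemma mse_bot [IsProbabilityMeasure μ] {f : Ω → ℝ} (hf : AEMeasurable f μ) :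
    mse μ f ⊥ = Var[f; μ] := by
  rw [mse, condExp_bot, variance_eq_integral hf]

lemma condExp_comap_ae_eq_integral_of_indepFun [IsFiniteMeasure μ] {β : Type*}
    [mβ : MeasurableSpace β] {Y : Ω → β} {w : Ω → ℝ} (hY : Measurable Y)
    (hw : AEMeasurable w μ) (hind : IndepFun Y w μ) :
    μ[w | mβ.comap Y] =ᵐ[μ] fun _ => μ[w] := by
  -- `condExp_indep_eq` needs `comap w ≤ mΩ`, so we pass to a measurable modification of `w`.
  have hind' : IndepFun (hw.mk w) Y μ := (hind.congr .rfl hw.ae_eq_mk).symm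
  rw [IndepFun_iff_Indep] at hind'
  calc μ[w | mβ.comap Y] =ᵐ[μ] μ[hw.mk w | mβ.comap Y] := condExp_congr_ae hw.ae_eq_mk
    _ =ᵐ[μ] fun _ => μ[hw.mk w] :=
        condExp_indep_eq hw.measurable_mk.comap_le hY.comap_le
          (Measurable.of_comap_le le_rfl).stronglyMeasurable hind'
    _ = fun _ => μ[w] := by rw [integral_congr_ae hw.ae_eq_mk]

lemma mse_indicator_of_indepFun [IsFiniteMeasure μ] {β : Type*} [mβ : MeasurableSpace β]
    {Y : Ω → β} {w : Ω → ℝ} {S : Set Ω} (hY : Measurable Y) (hS : MeasurableSet[mβ.comap Y] S)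
    (hw : AEMeasurable w μ) (hwi : Integrable w μ) (hw0 : μ[w] = 0) (hind : IndepFun Y w μ) :
    mse μ (S.indicator w) (mβ.comap Y) = μ.real S * ∫ ω, w ω ^ 2 ∂μ := by
  have hcond : μ[S.indicator w | mβ.comap Y] =ᵐ[μ] 0 := by
    filter_upwards [condExp_indicator hwi hS,
      condExp_comap_ae_eq_integral_of_indepFun hY hw hind] with ω h1 h2
    simp [h1, h2, hw0]
  rw [mse_eq_integral_sq_of_condExp_ae_eq_zero hcond]
  obtain ⟨T, hT, rfl⟩ := hS
  have hind' : IndepFun (T.indicator (1 : β → ℝ) ∘ Y) ((fun t : ℝ => t ^ 2) ∘ w) μ :=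
    hind.comp (measurable_one.indicator hT) (measurable_id.pow_const 2)
  calc ∫ ω, (Y ⁻¹' T).indicator w ω ^ 2 ∂μ
        = μ[(T.indicator 1 ∘ Y * (fun t : ℝ => t ^ 2) ∘ w : Ω → ℝ)] := by
        congr 1; ext ω; by_cases h : Y ω ∈ T <;> simp [h]
    _ = μ[(T.indicator 1 ∘ Y : Ω → ℝ)] * μ[(fun t : ℝ => t ^ 2) ∘ w] :=
        hind'.integral_mul_eq_mul_integral
          ((measurable_one.indicator hT).comp hY).aestronglyMeasurable
          (hw.pow_const 2).aestronglyMeasurable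
    _ = μ.real (Y ⁻¹' T) * ∫ ω, w ω ^ 2 ∂μ := by
        rw [← integral_indicator_one (hY hT)]; rfl

lemma totalErr_eq_mse (x : ℕ → Ω → ℝ) (s : Finset ℕ) :
    totalErr μ x s = mse μ (x 0) (scheduleInfo x s 0) + mse μ (x 1) (scheduleInfo x s 1) +
      mse μ (x 2) (scheduleInfo x s 2) := by
  simp only [totalErr, Finset.sum_range_succ, Finset.sum_range_zero, zero_add]; rfl

variable [IsFiniteMeasure μ] {x : ℕ → Ω → ℝ}

lemma mse_scheduleInfo_eq_zero (hx : ∀ t, Measurable (x t)) {s : Finset ℕ} {t : ℕ} (ht : t ∈ s)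
    (hxt : Integrable (x t) μ) : mse μ (x t) (scheduleInfo x s t) = 0 :=
  mse_eq_zero_of_stronglyMeasurable (iSup₂_le fun k _ => (hx k).comap_le)
    (Measurable.of_comap_le (le_iSup₂ (f := fun k (_ : k ∈ s.filter (· ≤ t)) =>
      MeasurableSpace.comap (x k) inferInstance) t
        (Finset.mem_filter.2 ⟨ht, le_rfl⟩))).stronglyMeasurable hxt

lemma totalErr_zero_one (hx : ∀ t, Measurable (x t)) (h0 : Integrable (x 0) μ)
    (h1 : Integrable (x 1) μ) :
    totalErr μ x {0, 1} = mse μ (x 2)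
      (MeasurableSpace.comap (x 0) inferInstance ⊔ MeasurableSpace.comap (x 1) inferInstance) := by
  rw [totalErr_eq_mse, mse_scheduleInfo_eq_zero hx (by decide) h0,
    mse_scheduleInfo_eq_zero hx (by decide) h1, scheduleInfo,
    show ({0, 1} : Finset ℕ).filter (· ≤ 2) = {0, 1} by decide, Finset.iSup_insert,
    Finset.iSup_singleton, zero_add, zero_add]

lemma totalErr_zero_two (hx : ∀ t, Measurable (x t)) (h0 : Integrable (x 0) μ)
    (h2 : Integrable (x 2) μ) :
    totalErr μ x {0, 2} = mse μ (x 1) (MeasurableSpace.comap (x 0) inferInstance) := by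
  rw [totalErr_eq_mse, mse_scheduleInfo_eq_zero hx (by decide) h0,
    mse_scheduleInfo_eq_zero hx (by decide) h2, scheduleInfo,
    show ({0, 2} : Finset ℕ).filter (· ≤ 1) = {0} by decide, Finset.iSup_singleton, zero_add,
    add_zero]

lemma totalErr_one_two (hx : ∀ t, Measurable (x t)) (h1 : Integrable (x 1) μ)
    (h2 : Integrable (x 2) μ) : totalErr μ x {1, 2} = mse μ (x 0) ⊥ := by
  rw [totalErr_eq_mse, mse_scheduleInfo_eq_zero hx (by decide) h1,
    mse_scheduleInfo_eq_zero hx (by decide) h2, scheduleInfo,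
    show ({1, 2} : Finset ℕ).filter (· ≤ 0) = ∅ by decide, add_zero, add_zero]
  simp only [Finset.notMem_empty, iSup_false, iSup_bot]

end MeanSquareError

namespace MeasureTheory.pdf.IsUniform

variable {Ω : Type*} {mΩ : MeasurableSpace Ω} {μ : Measure Ω} {b c : ℝ} {w : Ω → ℝ}

lemma isUniform_Icc_iff :
    IsUniform w (Icc b c) μ ↔
      μ.map w = (ENNReal.ofReal (c - b))⁻¹ • volume.restrict (Icc b c) := by
  rw [IsUniform, ProbabilityTheory.cond, Real.volume_Icc]

lemma aemeasurable_Icc (hbc : b < c) (hw : IsUniform w (Icc b c) μ) : AEMeasurable w μ :=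
  hw.aemeasurable (by simp [hbc]) (by simp)

lemma isProbabilityMeasure_Icc (hbc : b < c) (hw : IsUniform w (Icc b c) μ) :
    IsProbabilityMeasure μ :=
  hw.isProbabilityMeasure (by simp [hbc]) (by simp)

lemma integrable_Icc (hbc : b < c) (hw : IsUniform w (Icc b c) μ) : Integrable w μ := by
  refine (integrable_map_measure aestronglyMeasurable_id (hw.aemeasurable_Icc hbc)).mp ?_
  rw [hw, ProbabilityTheory.cond]
  have hid : IntegrableOn id (Icc b c) := continuous_id.integrableOn_Icc
  exact hid.smul_measure (by simp [hbc])

lemma integral_comp_Icc (hbc : b < c) (hw : IsUniform w (Icc b c) μ) {g : ℝ → ℝ}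
    (hg : Continuous g) : ∫ ω, g (w ω) ∂μ = (c - b)⁻¹ * ∫ y in b..c, g y := by
  rw [← integral_map (hw.aemeasurable_Icc hbc) hg.aestronglyMeasurable, hw,
    ProbabilityTheory.cond, integral_smul_measure, integral_Icc_eq_integral_Ioc,
    ← intervalIntegral.integral_of_le hbc.le, Real.volume_Icc, ENNReal.toReal_inv,
    ENNReal.toReal_ofReal (sub_pos.2 hbc).le, smul_eq_mul]

lemma integral_Icc (hbc : b < c) (hw : IsUniform w (Icc b c) μ) :
    ∫ ω, w ω ∂μ = (b + c) / 2 := by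
  rw [hw.integral_comp_Icc hbc (g := fun y => y) continuous_id, integral_id]
  field_simp [(sub_pos.2 hbc).ne']
  ring

lemma integral_sq_Icc (hbc : b < c) (hw : IsUniform w (Icc b c) μ) :
    ∫ ω, w ω ^ 2 ∂μ = (b ^ 2 + b * c + c ^ 2) / 3 := by
  rw [hw.integral_comp_Icc hbc (continuous_pow 2), integral_pow]
  field_simp [(sub_pos.2 hbc).ne']
  ring

lemma measure_preimage_singleton_Icc (hbc : b < c) (hw : IsUniform w (Icc b c) μ) (y : ℝ) :
    μ (w ⁻¹' {y}) = 0 := by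
  rw [hw.measure_preimage (by simp [hbc]) (by simp) (measurableSet_singleton y),
    measure_mono_null inter_subset_right Real.volume_singleton, ENNReal.zero_div]

end MeasureTheory.pdf.IsUniform

section Counterexample

variable {Ω : Type*} {mΩ : MeasurableSpace Ω} {μ : Measure Ω}

lemma mse_indicator_of_isUniform {β : Type*} [mβ : MeasurableSpace β]
    {Y : Ω → β} {w : Ω → ℝ} {S : Set Ω} {a : ℝ} (hY : Measurable Y)
    (hS : MeasurableSet[mβ.comap Y] S) (ha : 0 < a) (hw : pdf.IsUniform w (Icc (-a) a) μ)
    (hind : IndepFun Y w μ) :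
    mse μ (S.indicator w) (mβ.comap Y) = μ.real S * (a ^ 2 / 3) := by
  have hbc : -a < a := by linarith
  have := hw.isProbabilityMeasure_Icc hbc
  rw [mse_indicator_of_indepFun hY hS (hw.aemeasurable_Icc hbc) (hw.integrable_Icc hbc)
    (by rw [hw.integral_Icc hbc]; ring) hind, hw.integral_sq_Icc hbc]
  ring

lemma ae_eq_one_or_eq_neg_one [IsProbabilityMeasure μ] {X : Ω → ℝ} (hX : Measurable X)
    (h1 : μ {ω | X ω = 1} = 1 / 2) (h2 : μ {ω | X ω = -1} = 1 / 2) :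
    ∀ᵐ ω ∂μ, X ω = 1 ∨ X ω = -1 := by
  have hdisj : Disjoint {ω | X ω = 1} {ω | X ω = -1} :=
    disjoint_left.2 fun ω (h : X ω = 1) (h' : X ω = -1) => by linarith
  have hunion : μ ({ω | X ω = 1} ∪ {ω | X ω = -1}) = 1 := by
    rw [measure_union hdisj (hX (measurableSet_singleton _)), h1, h2, ENNReal.add_halves]
  have hcompl := (prob_compl_eq_zero_iff ((hX (measurableSet_singleton _)).union
    (hX (measurableSet_singleton _)))).2 hunion
  filter_upwards [measure_eq_zero_iff_ae_notMem.1 hcompl] with ω hω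
  simpa [or_iff_not_imp_left] using hω

lemma integrable_of_measure_eq_half [IsProbabilityMeasure μ] {X : Ω → ℝ} (hX : Measurable X)
    (h1 : μ {ω | X ω = 1} = 1 / 2) (h2 : μ {ω | X ω = -1} = 1 / 2) : Integrable X μ :=
  (integrable_const (1 : ℝ)).mono' hX.aestronglyMeasurable
    ((ae_eq_one_or_eq_neg_one hX h1 h2).mono fun ω h => by rcases h with h | h <;> simp [h])

lemma variance_eq_one_of_measure_eq_half [IsProbabilityMeasure μ] {X : Ω → ℝ} (hX : Measurable X)
    (h1 : μ {ω | X ω = 1} = 1 / 2) (h2 : μ {ω | X ω = -1} = 1 / 2) : Var[X; μ] = 1 := by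
  have hpm := ae_eq_one_or_eq_neg_one hX h1 h2
  have hS : MeasurableSet {ω | X ω = 1} := hX (measurableSet_singleton _)
  have hmean : μ[X] = 0 := by
    have hX' : X =ᵐ[μ] fun ω => 2 * {ω | X ω = 1}.indicator 1 ω - 1 := by
      filter_upwards [hpm] with ω hω
      rcases hω with h | h <;> simp [indicator_apply, h] <;> norm_num
    rw [integral_congr_ae hX', integral_sub ((integrable_const _).indicator hS |>.const_mul 2)
      (integrable_const 1), integral_const_mul, integral_indicator_one hS, measureReal_def, h1]
    norm_num
  rw [variance_eq_integral hX.aemeasurable, hmean]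
  calc ∫ ω, (X ω - 0) ^ 2 ∂μ = ∫ _, (1 : ℝ) ∂μ :=
        integral_congr_ae (hpm.mono fun ω h => by rcases h with h | h <;> simp [h])
    _ = 1 := by simp

lemma indepFun_prodMk_ite {X W V : Ω → ℝ} (hind : iIndepFun ![X, W, V] μ)
    (hX : AEMeasurable X μ) (hW : AEMeasurable W μ) (hV : AEMeasurable V μ) :
    IndepFun (fun ω => (X ω, if X ω = 1 then W ω else 0)) V μ := by
  have hXW : IndepFun (fun ω => (X ω, W ω)) V μ :=
    hind.indepFun_prodMk₀ (fun i => by fin_cases i <;> assumption) 0 1 2 (by decide) (by decide)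
  have hgate : Measurable fun p : ℝ × ℝ => (p.1, if p.1 = 1 then p.2 else 0) :=
    measurable_fst.prodMk (Measurable.ite (measurableSet_eq_fun measurable_fst measurable_const)
      measurable_snd measurable_const)
  exact hXW.comp hgate measurable_id

lemma measureReal_ite_eq_zero [IsProbabilityMeasure μ] {X W : Ω → ℝ} (hX : Measurable X)
    (hW : μ (W ⁻¹' {0}) = 0) :
    μ.real {ω | (if X ω = 1 then W ω else 0) = 0} = 1 - μ.real {ω | X ω = 1} := by
  have hae : ({ω | (if X ω = 1 then W ω else 0) = 0} : Set Ω) =ᵐ[μ]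
      ({ω | X ω = 1}ᶜ : Set Ω) := by
    filter_upwards [measure_eq_zero_iff_ae_notMem.1 hW] with ω hω
    change ((if X ω = 1 then W ω else 0) = 0) = ¬X ω = 1
    by_cases h : X ω = 1 <;> simp_all
  exact (measureReal_congr hae).trans (probReal_compl_eq_one_sub (hX (measurableSet_singleton 1)))

lemma mse_indicator_comap_sup_of_ite [IsProbabilityMeasure μ] {X W V Z : Ω → ℝ} {a b c : ℝ}
    (hX : Measurable X) (hZ : Measurable Z) (hZX : ∀ ω, Z ω = if X ω = 1 then W ω else 0)
    (hbc : b < c) (hW : pdf.IsUniform W (Icc b c) μ) (ha : 0 < a)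
    (hV : pdf.IsUniform V (Icc (-a) a) μ) (hind : iIndepFun ![X, W, V] μ) :
    mse μ ({ω | Z ω = 0}.indicator V)
        (MeasurableSpace.comap X inferInstance ⊔ MeasurableSpace.comap Z inferInstance) =
      (1 - μ.real {ω | X ω = 1}) * (a ^ 2 / 3) := by
  have hZ0 : μ.real {ω | Z ω = 0} = 1 - μ.real {ω | X ω = 1} := by
    simp_rw [hZX]
    exact measureReal_ite_eq_zero hX (hW.measure_preimage_singleton_Icc hbc 0)
  have hindZ : IndepFun (fun ω => (X ω, Z ω)) V μ := by
    simpa only [hZX] using indepFun_prodMk_ite hind hX.aemeasurable (hW.aemeasurable_Icc hbc)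
      (hV.aemeasurable_Icc (by linarith))
  calc mse μ ({ω | Z ω = 0}.indicator V)
        (MeasurableSpace.comap X inferInstance ⊔ MeasurableSpace.comap Z inferInstance)
      = mse μ ({ω | Z ω = 0}.indicator V)
          (MeasurableSpace.comap (fun ω => (X ω, Z ω)) inferInstance) := by
        congr 1; exact (MeasurableSpace.comap_prodMk X Z).symm
    _ = (1 - μ.real {ω | X ω = 1}) * (a ^ 2 / 3) := by
        rw [mse_indicator_of_isUniform (S := {ω | Z ω = 0}) (hX.prodMk hZ)
          ⟨Prod.snd ⁻¹' {0}, measurable_snd (measurableSet_singleton 0), rfl⟩ ha hV hindZ, hZ0]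

end Counterexample

theorem stmt_14 {Ω : Type*} [mΩ : MeasurableSpace Ω] (μ : Measure Ω)
    [IsProbabilityMeasure μ]
    (x : ℕ → Ω → ℝ) (w0 w1 : Ω → ℝ)
    (hxmeas : ∀ t, Measurable (x t))
    (hx0 : μ {ω | x 0 ω = 1} = 1 / 2 ∧ μ {ω | x 0 ω = -1} = 1 / 2)
    (hx1 : ∀ ω, x 1 ω = if x 0 ω = 1 then w0 ω else 0)
    (hx2 : ∀ ω, x 2 ω = if x 1 ω = 0 then w1 ω else 0)
    (hw0law : μ.map w0 = (12 : ENNReal)⁻¹ • volume.restrict (Set.Icc (-6 : ℝ) 6))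
    (hw1law : μ.map w1 = (12 : ENNReal)⁻¹ • volume.restrict (Set.Icc (-6 : ℝ) 6))
    (hindep : ProbabilityTheory.iIndepFun
      ![x 0, w0, w1] μ) :
    totalErr μ x {0, 1} = 6 ∧ totalErr μ x {0, 2} = 6 ∧ totalErr μ x {1, 2} = 1 ∧
    ∀ t₁ t₂ : ℕ, t₁ < t₂ → t₂ ≤ 2 →
      0 < totalErr μ x {t₁, t₂} ∧ totalErr μ x {1, 2} ≤ totalErr μ x {t₁, t₂} := by
  have hu0 : pdf.IsUniform w0 (Icc (-6) 6) μ :=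
    pdf.IsUniform.isUniform_Icc_iff.2 (by rw [hw0law]; norm_num)
  have hu1 : pdf.IsUniform w1 (Icc (-6) 6) μ :=
    pdf.IsUniform.isUniform_Icc_iff.2 (by rw [hw1law]; norm_num)
  have h6 : (-6 : ℝ) < 6 := by norm_num
  have hp : μ.real {ω | x 0 ω = 1} = 1 / 2 := by rw [measureReal_def, hx0.1]; norm_num
  have hx1_eq : x 1 = {ω | x 0 ω = 1}.indicator w0 := funext fun ω => by
    rw [hx1, indicator_apply]; rfl
  have hx2_eq : x 2 = {ω | x 1 ω = 0}.indicator w1 := funext fun ω => by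
    rw [hx2, indicator_apply]; rfl
  have hx0i : Integrable (x 0) μ := integrable_of_measure_eq_half (hxmeas 0) hx0.1 hx0.2
  have hx1i : Integrable (x 1) μ :=
    hx1_eq ▸ (hu0.integrable_Icc h6).indicator (hxmeas 0 (measurableSet_singleton 1))
  have hx2i : Integrable (x 2) μ :=
    hx2_eq ▸ (hu1.integrable_Icc h6).indicator (hxmeas 1 (measurableSet_singleton 0))
  have h01 : totalErr μ x {0, 1} = 6 := by
    rw [totalErr_zero_one hxmeas hx0i hx1i, hx2_eq, mse_indicator_comap_sup_of_ite (hxmeas 0)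
      (hxmeas 1) hx1 h6 hu0 (by norm_num) hu1 hindep, hp]
    norm_num
  have h02 : totalErr μ x {0, 2} = 6 := by
    rw [totalErr_zero_two hxmeas hx0i hx2i, hx1_eq,
      mse_indicator_of_isUniform (S := {ω | x 0 ω = 1}) (hxmeas 0)
        ⟨{1}, measurableSet_singleton 1, rfl⟩ (by norm_num) hu0
        (hindep.indepFun (i := 0) (j := 1) (by decide)), hp]
    norm_num
  have h12 : totalErr μ x {1, 2} = 1 := by
    rw [totalErr_one_two hxmeas hx1i hx2i, mse_bot (hxmeas 0).aemeasurable,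
      variance_eq_one_of_measure_eq_half (hxmeas 0) hx0.1 hx0.2]
  refine ⟨h01, h02, h12, fun t₁ t₂ hlt ht₂ => ?_⟩
  interval_cases t₂ <;> interval_cases t₁ <;> norm_num [h01, h02, h12]
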